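/- arXiv:2505.24215 — 3 statements merged into one kernel-verified Lean document; each statement's English description precedes it below -/
import Mathlib

section
/- Let 𝔽_q be a finite field, α a nontrivial multiplicative character, and t ∈ 𝔽_q*. Then the finite hypergeometric function with all upper parameters α and all lower parameters ε satisfies the transformation formula: _{d+1}F_d(α,…,α; ε,…,ε; t) = ᾱ((−1)^{d+1} t) · _{d+1}F_d(α,…,α; ε,…,ε; t^{-1}). -/
open scoped Classical

noncomputable instance {F : Type*} [Field F] [Fintype F] : Fintype (MulChar F ℂ) :=
  Fintype.ofFinite _

/-- The Gauss sum `g(φ) = -Σ_{x ∈ 𝔽_q} φ(x) ψ(x)`. -/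
noncomputable def gaussS {F : Type*} [Field F] [Fintype F]
    (ψ : AddChar F ℂ) (χ : MulChar F ℂ) : ℂ := -∑ x : F, χ x * ψ x

/-- The variant `g°(φ)`: `g(φ)` for `φ ≠ ε`, and `q` for `φ = ε`. -/
noncomputable def gaussS' {F : Type*} [Field F] [Fintype F]
    (ψ : AddChar F ℂ) (χ : MulChar F ℂ) : ℂ :=
  if χ = 1 then (Fintype.card F : ℂ) else gaussS ψ χ

set_option linter.unusedSectionVars false

section Aux
variable {F : Type*} [Field F] [Fintype F] (ψ : AddChar F ℂ)

lemma gaussS_eq (χ : MulChar F ℂ) : gaussS ψ χ = -gaussSum χ ψ := rfl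

lemma gaussS'_one : gaussS' ψ (1 : MulChar F ℂ) = (Fintype.card F : ℂ) := if_pos rfl

lemma gaussS'_of_ne_one {χ : MulChar F ℂ} (h : χ ≠ 1) : gaussS' ψ χ = gaussS ψ χ := if_neg h

lemma gaussS_one (hψ : ψ ≠ 1) : gaussS ψ (1 : MulChar F ℂ) = 1 := by
  have hψ0 : ψ ≠ 0 := hψ
  have hsum : ∑ x : F, ψ x = 0 := AddChar.sum_eq_zero_iff_ne_zero.mpr hψ0
  have h : ∑ x : F, (1 : MulChar F ℂ) x * ψ x
      = ∑ x : F, (ψ x - if x = 0 then 1 else 0) := by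
    refine Finset.sum_congr rfl (fun x _ => ?_)
    rcases eq_or_ne x 0 with h0 | h0
    · simp [h0, MulChar.map_zero]
    · rw [MulChar.one_apply (isUnit_iff_ne_zero.mpr h0), one_mul, if_neg h0, sub_zero]
  rw [gaussS, h, Finset.sum_sub_distrib, hsum, Finset.sum_ite_eq' Finset.univ (0 : F)
    (fun _ => (1 : ℂ))]
  simp

lemma mulchar_neg_one_sq (χ : MulChar F ℂ) : χ (-1) * χ (-1) = 1 := by
  rw [← map_mul]; norm_num

lemma mulchar_inv_neg_one (χ : MulChar F ℂ) : χ⁻¹ (-1) = χ (-1) := by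
  rw [MulChar.inv_apply_eq_inv']
  exact inv_eq_of_mul_eq_one_left (mulchar_neg_one_sq χ)

lemma gaussS_refl (hψ : ψ ≠ 1) {χ : MulChar F ℂ} (hχ : χ ≠ 1) :
    gaussS ψ χ * gaussS ψ χ⁻¹ = χ (-1) * (Fintype.card F : ℂ) := by
  have hprim : ψ.IsPrimitive := AddChar.IsPrimitive.of_ne_one hψ
  have h1 := gaussSum_mul_gaussSum_eq_card hχ hprim
  have h2 := mul_gaussSum_inv_eq_gaussSum χ⁻¹ ψ
  rw [gaussS_eq, gaussS_eq, neg_mul_neg, ← h2, mulchar_inv_neg_one,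
    mul_left_comm, h1]

end Aux

section Aux2
variable {F : Type*} [Field F] [Fintype F] {ψ : AddChar F ℂ}

lemma cardC_ne_zero : (Fintype.card F : ℂ) ≠ 0 :=
  Nat.cast_ne_zero.mpr Fintype.card_ne_zero

lemma mulchar_neg_one_ne_zero (χ : MulChar F ℂ) : χ (-1) ≠ 0 := by
  intro h
  have := mulchar_neg_one_sq χ
  rw [h, mul_zero] at this
  exact zero_ne_one this

lemma gaussS_ne_zero (hψ : ψ ≠ 1) (χ : MulChar F ℂ) : gaussS ψ χ ≠ 0 := by
  rcases eq_or_ne χ 1 with h | h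
  · rw [h, gaussS_one ψ hψ]; exact one_ne_zero
  · intro H
    have h1 := gaussS_refl ψ hψ h
    rw [H, zero_mul] at h1
    exact mul_ne_zero (mulchar_neg_one_ne_zero χ) cardC_ne_zero h1.symm

lemma gaussS'_ne_zero (hψ : ψ ≠ 1) (χ : MulChar F ℂ) : gaussS' ψ χ ≠ 0 := by
  unfold gaussS'
  split_ifs
  · exact cardC_ne_zero
  · exact gaussS_ne_zero hψ χ

/-- The key Gauss-sum identity behind the transformation formula. -/
lemma key_identity (hψ : ψ ≠ 1) {α : MulChar F ℂ} (hα : α ≠ 1) (ν : MulChar F ℂ) :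
    gaussS ψ ν⁻¹ * gaussS' ψ ν
      = α (-1) * (gaussS ψ (α * ν) * gaussS' ψ ((α * ν)⁻¹)) := by
  rcases eq_or_ne ν 1 with h1 | h1
  · subst h1
    rw [inv_one, mul_one, gaussS_one ψ hψ, gaussS'_one, one_mul,
      gaussS'_of_ne_one ψ (by simpa using hα), gaussS_refl ψ hψ hα, ← mul_assoc,
      mulchar_neg_one_sq, one_mul]
  rcases eq_or_ne ν α⁻¹ with h2 | h2
  · subst h2
    have hc : α * α⁻¹ = 1 := mul_inv_cancel α
    rw [inv_inv, hc, inv_one, gaussS_one ψ hψ, gaussS'_one, one_mul,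
      gaussS'_of_ne_one ψ h1, gaussS_refl ψ hψ hα]
  · have hαν : α * ν ≠ 1 := fun h => h2 (eq_inv_of_mul_eq_one_left (mul_comm α ν ▸ h))
    have hν' : (α * ν)⁻¹ ≠ 1 := fun h => hαν (inv_eq_one.mp h)
    have hmul : (α * ν) (-1) = α (-1) * ν (-1) := by
      rw [MulChar.coeToFun_mul, Pi.mul_apply]
    rw [gaussS'_of_ne_one ψ h1, gaussS'_of_ne_one ψ hν', mul_comm (gaussS ψ ν⁻¹),
      gaussS_refl ψ hψ h1, gaussS_refl ψ hψ hαν, hmul]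
    linear_combination (-(ν (-1) * (Fintype.card F : ℂ))) * mulchar_neg_one_sq α

end Aux2

/-- The Pochhammer symbol `(φ)_ν = g(φν)/g(φ)`. -/
noncomputable def pochS {F : Type*} [Field F] [Fintype F]
    (ψ : AddChar F ℂ) (φ ν : MulChar F ℂ) : ℂ := gaussS ψ (φ * ν) / gaussS ψ φ

/-- The Pochhammer variant `(φ)°_ν = g°(φν)/g°(φ)`. -/
noncomputable def pochS' {F : Type*} [Field F] [Fintype F]
    (ψ : AddChar F ℂ) (φ ν : MulChar F ℂ) : ℂ := gaussS' ψ (φ * ν) / gaussS' ψ φ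

/-- Otsubo's hypergeometric function over the finite field `𝔽_q`:
`_{d+1}F_d(α₀,…,α_d; β₁,…,β_d; t)
  = (1/(1-q)) Σ_ν [(α₀)_ν ⋯ (α_d)_ν / ((ε)°_ν (β₁)°_ν ⋯ (β_d)°_ν)] ν(t)`. -/
noncomputable def hgF {F : Type*} [Field F] [Fintype F] (ψ : AddChar F ℂ) {d : ℕ}
    (α : Fin (d + 1) → MulChar F ℂ) (β : Fin d → MulChar F ℂ) (t : F) : ℂ :=
  (1 / (1 - (Fintype.card F : ℂ))) *
    ∑ ν : MulChar F ℂ,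
      ((∏ i, pochS ψ (α i) ν) / (pochS' ψ 1 ν * ∏ j, pochS' ψ (β j) ν)) * ν t

/-- Transformation formula between `t` and `t⁻¹` for the finite-field hypergeometric
function with all upper parameters equal to a nontrivial `α` and all lower parameters
trivial: `_{d+1}F_d(α,…,α; ε,…,ε; t) = ᾱ((-1)^{d+1} t) · _{d+1}F_d(α,…,α; ε,…,ε; t⁻¹)`. -/
theorem finite_hypergeometric_transformation (F : Type*) [Field F] [Fintype F]
    (ψ : AddChar F ℂ) (hψ : ψ ≠ 1) (d : ℕ) (α : MulChar F ℂ) (hα : α ≠ 1)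
    (t : F) (ht : t ≠ 0) :
    hgF ψ (fun _ : Fin (d + 1) => α) (fun _ : Fin d => 1) t
      = α⁻¹ ((-1) ^ (d + 1) * t) *
        hgF ψ (fun _ : Fin (d + 1) => α) (fun _ : Fin d => 1) t⁻¹ := by
  have hq0 : (Fintype.card F : ℂ) ≠ 0 := cardC_ne_zero
  set q : ℂ := (Fintype.card F : ℂ) with hqdef
  rw [hgF, hgF, ← mul_assoc, mul_comm (α⁻¹ ((-1) ^ (d + 1) * t)), mul_assoc]
  congr 1
  rw [Finset.mul_sum]
  have hinvol : Function.Involutive (fun ν : MulChar F ℂ => (α * ν)⁻¹) := by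
    intro ν
    simp [mul_inv, ← mul_assoc]
  refine Fintype.sum_bijective _ hinvol.bijective _ _ fun ν => ?_
  simp only [pochS, pochS', Finset.prod_const, Finset.card_univ, Fintype.card_fin,
    one_mul, gaussS'_one]
  have hA : gaussS ψ α ≠ 0 := gaussS_ne_zero hψ α
  have hb : gaussS' ψ ((α * ν)⁻¹) ≠ 0 := gaussS'_ne_zero hψ _
  have he : gaussS' ψ ν ≠ 0 := gaussS'_ne_zero hψ ν
  have hm : α (-1) ≠ 0 := mulchar_neg_one_ne_zero α
  have hxt : α t ≠ 0 := by
    have h : α t * α t⁻¹ = 1 := by rw [← map_mul, mul_inv_cancel₀ ht, map_one]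
    exact left_ne_zero_of_mul_eq_one h
  have hAinv : α * (α * ν)⁻¹ = ν⁻¹ := by
    rw [mul_inv, ← mul_assoc, mul_inv_cancel α, one_mul]
  have hx : ((α * ν)⁻¹) t⁻¹ = α t * ν t := by
    rw [MulChar.inv_apply' _ t⁻¹, inv_inv, MulChar.coeToFun_mul, Pi.mul_apply]
  have hc : α⁻¹ ((-1 : F) ^ (d + 1) * t) = (α (-1)) ^ (d + 1) * (α t)⁻¹ := by
    rw [map_mul, map_pow, mulchar_inv_neg_one, MulChar.inv_apply_eq_inv']
  rw [hAinv, hx, hc, ← pow_succ' (gaussS' ψ ν / q), ← pow_succ' (gaussS' ψ ((α * ν)⁻¹) / q)]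
  have hstar1 : gaussS ψ (α * ν) / gaussS ψ α / (gaussS' ψ ν / q)
      = α (-1) * (gaussS ψ ν⁻¹ / gaussS ψ α / (gaussS' ψ ((α * ν)⁻¹) / q)) := by
    have hkey := key_identity hψ hα ν
    have hmsq := mulchar_neg_one_sq α
    rw [div_div_div_comm, div_div_div_comm (gaussS ψ ν⁻¹), ← mul_div_assoc]
    congr 1
    rw [← mul_div_assoc, div_eq_div_iff he hb]
    linear_combination (-(α (-1))) * hkey
      - (gaussS ψ (α * ν) * gaussS' ψ ((α * ν)⁻¹)) * hmsq
  have hstar : (gaussS ψ (α * ν) / gaussS ψ α) ^ (d + 1) / (gaussS' ψ ν / q) ^ (d + 1)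
      = (α (-1)) ^ (d + 1) *
        ((gaussS ψ ν⁻¹ / gaussS ψ α) ^ (d + 1) / (gaussS' ψ ((α * ν)⁻¹) / q) ^ (d + 1)) := by
    rw [← div_pow, ← div_pow, hstar1, mul_pow]
  rw [hstar]
  have hxx : (α t)⁻¹ * α t = 1 := inv_mul_cancel₀ hxt
  linear_combination (-(α (-1) ^ (d + 1) *
    ((gaussS ψ ν⁻¹ / gaussS ψ α) ^ (d + 1) / (gaussS' ψ ((α * ν)⁻¹) / q) ^ (d + 1)) * ν t)) * hxx
end

section
/- Let N ≥ 2 and t_0 a unit with t_0^N ≠ 1. The map (z_1,…,z_d,w) ↦ (z_1^{-1},…,z_d^{-1}, w/(z_1^2⋯z_d^2 t_0^{N−1})) sends points of the variety w^N = z_1⋯z_d (1−z_1)^{N−1}⋯(1−z_d)^{N−1}(z_1⋯z_d − t_0^N)^{N−1} with w, z_i, 1−z_i, z_1⋯z_d − t_0^N all nonzero, to points of the corresponding variety with parameter t_0^{−N}, provided N is odd or d is odd; if both N and d are even, the same holds after multiplying the w-coordinate by a fixed ξ with ξ^N = −1. -/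
open scoped Classical in
/-- The map `(z₁,…,z_d,w) ↦ (z₁⁻¹,…,z_d⁻¹, w/(z₁²⋯z_d² t₀^{N-1}))` (twisted by a fixed
`ξ` with `ξ^N = -1` when `N` and `d` are both even) sends points of the variety
`w^N = z₁⋯z_d (1-z₁)^{N-1}⋯(1-z_d)^{N-1}(z₁⋯z_d - t₀^N)^{N-1}`, `w ≠ 0`, with
`z_i, 1-z_i, z₁⋯z_d - t₀^N` all nonzero, to points of the corresponding variety with
parameter `t₀^{-N}`. -/
theorem hypergeometric_scheme_inversion (K : Type*) [Field K] (N d : ℕ) (hN : 2 ≤ N)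
    (z : Fin d → K) (w t₀ ξ : K) (ht₀ : t₀ ≠ 0) (ht₁ : t₀ ^ N ≠ 1) (hw : w ≠ 0)
    (hz : ∀ i, z i ≠ 0) (h1z : ∀ i, 1 - z i ≠ 0) (hpt : (∏ i, z i) - t₀ ^ N ≠ 0)
    (hξ : Even N ∧ Even d → ξ ^ N = -1)
    (heq : w ^ N = (∏ i, z i) * (∏ i, (1 - z i) ^ (N - 1)) *
      ((∏ i, z i) - t₀ ^ N) ^ (N - 1)) :
    (if Even N ∧ Even d then ξ else 1) * w / ((∏ i, z i) ^ 2 * t₀ ^ (N - 1)) ≠ 0 ∧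
    ((if Even N ∧ Even d then ξ else 1) * w / ((∏ i, z i) ^ 2 * t₀ ^ (N - 1))) ^ N
      = (∏ i, (z i)⁻¹) * (∏ i, (1 - (z i)⁻¹) ^ (N - 1)) *
        ((∏ i, (z i)⁻¹) - (t₀ ^ N)⁻¹) ^ (N - 1) := by
  obtain ⟨n, hn⟩ : ∃ n, N = n + 1 := ⟨N - 1, by omega⟩
  set ε : K := if Even N ∧ Even d then ξ else 1 with hε
  have hP : (∏ i, z i) ≠ 0 := Finset.prod_ne_zero_iff.mpr (fun i _ => hz i)
  have hε0 : ε ≠ 0 := by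
    rw [hε]; split
    · rename_i h
      intro h0
      have := hξ h
      rw [h0, zero_pow (by omega : N ≠ 0)] at this
      exact absurd this (by norm_num)
    · exact one_ne_zero
  refine ⟨div_ne_zero (mul_ne_zero hε0 hw) (mul_ne_zero (pow_ne_zero _ hP) (pow_ne_zero _ ht₀)), ?_⟩
  have key : ε ^ N = ((-1:K) ^ n) ^ d * (-1:K) ^ n := by
    by_cases h : Even N ∧ Even d
    · have hnodd : Odd n := by
        rcases h.1 with ⟨k, hk⟩; exact ⟨k - 1, by omega⟩
      have h1 : ((-1:K) ^ n) ^ d = 1 := by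
        rw [hnodd.neg_one_pow, Even.neg_one_pow h.2]
      rw [hε, if_pos h, hξ h, h1, hnodd.neg_one_pow]; ring
    · rw [hε, if_neg h, one_pow]
      rcases Nat.even_or_odd n with hne | hno
      · rw [hne.neg_one_pow, one_pow, mul_one]
      · have hNe : Even N := by rcases hno with ⟨k, hk⟩; exact ⟨k + 1, by omega⟩
        have hdo : Odd d := Nat.odd_iff.mpr (by
          rcases Nat.even_or_odd d with hd | hd
          · exact absurd ⟨hNe, hd⟩ h
          · exact Nat.odd_iff.mp hd)
        rw [hno.neg_one_pow, hdo.neg_one_pow]; ring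
  have hprod1 : ∏ i, (z i)⁻¹ = (∏ i, z i)⁻¹ := by
    rw [← Finset.prod_inv_distrib]
  have hprod2 : ∏ i, (1 - (z i)⁻¹) ^ (N - 1)
      = (((-1:K) ^ n) ^ d) * ((∏ i, z i)⁻¹) ^ n * ∏ i, (1 - z i) ^ n := by
    have step : ∀ i ∈ Finset.univ, (1 - (z i)⁻¹) ^ (N - 1)
        = ((-1:K) ^ n) * ((z i)⁻¹) ^ n * (1 - z i) ^ n := by
      intro i _
      have h1 : (1 - (z i)⁻¹) = (-1) * (z i)⁻¹ * (1 - z i) := by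
        field_simp
        rw [sub_div, div_self (hz i)]
        ring
      rw [hn, Nat.add_sub_cancel, h1, mul_pow, mul_pow]
    rw [Finset.prod_congr rfl step, Finset.prod_mul_distrib, Finset.prod_mul_distrib,
      Finset.prod_const, Finset.prod_pow, Finset.prod_pow, ← Finset.prod_inv_distrib,
      Finset.card_univ, Fintype.card_fin]
  have hprod3 : (∏ i, z i)⁻¹ - (t₀ ^ N)⁻¹
      = (-1) * ((∏ i, z i) * t₀ ^ N)⁻¹ * ((∏ i, z i) - t₀ ^ N) := by
    field_simp
    ring
  rw [hprod1, hprod2, hprod3]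
  have htN : (t₀ : K) ^ N ≠ 0 := pow_ne_zero _ ht₀
  have hQ : (∏ i, (1 - z i) ^ n) ≠ 0 :=
    Finset.prod_ne_zero_iff.mpr (fun i _ => pow_ne_zero _ (h1z i))
  rw [hn] at heq key ⊢
  simp only [Nat.add_sub_cancel] at heq ⊢
  field_simp
  have hswap : (t₀ ^ (n+1) - ∏ i, z i) ^ n = (-1:K) ^ n * ((∏ i, z i) - t₀ ^ (n+1)) ^ n := by
    rw [← neg_pow, neg_sub]
  rw [div_pow, mul_pow, key, heq, neg_pow ((∏ i, z i - t₀ ^ (n + 1)) / ((∏ i, z i) * t₀ ^ (n + 1)))]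
  simp only [div_pow, mul_pow, one_pow, ← pow_mul]
  field_simp
  ring
end

section
/- Pullback formula for the differential form: on V*_{t_0^N}, the substitution u_i = z_i^{-1}, v = c·w/(z_1^2⋯z_d^2 t_0^{N−1}) (with c = ξ if N, d both even, ξ^N = −1, else c = 1) transforms ω_n = (1−u_1)^{n−1}⋯(1−u_d)^{n−1}(u_1⋯u_d − t_0^{−N})^{n−1} du_1∧⋯∧du_d / v^n into (−1)^{(d+1)n−1} ξ^{−φ_{N,d}(n)} t_0^{N−n} · (1−z_1)^{n−1}⋯(1−z_d)^{n−1}(z_1⋯z_d − t_0^N)^{n−1} dz_1∧⋯∧dz_d / w^n, where φ_{N,d}(n) = n if N and d are both even, and 0 otherwise. -/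
private lemma pullback_key {K : Type*} [Field K] (m j d : ℕ) (P Q R t w c : K)
    (hP : P ≠ 0) (ht : t ≠ 0) :
    ((-1 : K) ^ d * P⁻¹ * Q) ^ m * (-(P⁻¹ * (t ^ (m + j + 2))⁻¹) * R) ^ m *
        ((-1 : K) ^ d * (P ^ 2)⁻¹) / (c * w / (P ^ 2 * t ^ (m + j + 1))) ^ (m + 1)
      = (-1 : K) ^ (d * (m + 1) + m) * (c ^ (m + 1))⁻¹ * t ^ (j + 1) *
          (Q ^ m * R ^ m) / w ^ (m + 1) := by
  have c1 : (P⁻¹) ^ m * (P⁻¹) ^ m * (P ^ 2)⁻¹ * (P ^ 2) ^ (m + 1) = 1 := by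
    have h2 : (P ^ 2) ^ (m + 1) = P ^ m * P ^ m * P ^ 2 := by
      rw [← pow_mul, show 2 * (m + 1) = m + (m + 2) by ring, pow_add,
        show m + 2 = m + 2 from rfl, pow_add]; ring
    rw [inv_pow, h2]
    field_simp
  have c2 : ((t ^ (m + j + 2))⁻¹) ^ m * (t ^ (m + j + 1)) ^ (m + 1) = t ^ (j + 1) := by
    rw [inv_pow, ← pow_mul, ← pow_mul,
      show (m + j + 1) * (m + 1) = (m + j + 2) * m + (j + 1) by ring,
      pow_add, inv_mul_cancel_left₀ (pow_ne_zero _ ht)]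
  have NumEq : ((-1 : K) ^ d * P⁻¹ * Q) ^ m * (-(P⁻¹ * (t ^ (m + j + 2))⁻¹) * R) ^ m *
      ((-1 : K) ^ d * (P ^ 2)⁻¹) * (P ^ 2 * t ^ (m + j + 1)) ^ (m + 1)
      = (-1 : K) ^ (d * (m + 1) + m) * t ^ (j + 1) * (Q ^ m * R ^ m) := by
    calc ((-1 : K) ^ d * P⁻¹ * Q) ^ m * (-(P⁻¹ * (t ^ (m + j + 2))⁻¹) * R) ^ m *
        ((-1 : K) ^ d * (P ^ 2)⁻¹) * (P ^ 2 * t ^ (m + j + 1)) ^ (m + 1)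
        = (((-1 : K) ^ d) ^ m * (-1 : K) ^ m * (-1 : K) ^ d) *
            ((P⁻¹) ^ m * (P⁻¹) ^ m * (P ^ 2)⁻¹ * (P ^ 2) ^ (m + 1)) *
            (((t ^ (m + j + 2))⁻¹) ^ m * (t ^ (m + j + 1)) ^ (m + 1)) *
            (Q ^ m * R ^ m) := by ring
      _ = (-1 : K) ^ (d * (m + 1) + m) * t ^ (j + 1) * (Q ^ m * R ^ m) := by
          rw [c1, c2]; ring
  rw [div_pow, div_div_eq_mul_div, NumEq]
  ring

open scoped Classical in
/-- Pullback formula for the differential form (equation (ι₂) of the paper), stated as the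
scalar identity obtained after substituting `u_i = z_i⁻¹`,
`v = c·w/(z₁²⋯z_d² t₀^{N-1})` (with `c = ξ`, `ξ^N = -1`, if `N, d` are both even and
`c = 1` otherwise) and `du₁∧⋯∧du_d = (-1)^d (z₁⋯z_d)⁻² dz₁∧⋯∧dz_d`: the coefficient of
`ι*(ω_n)` equals `(-1)^{(d+1)n-1} ξ^{-φ_{N,d}(n)} t₀^{N-n}` times the coefficient of
`ω_n`, where `φ_{N,d}(n) = n` if `N` and `d` are both even and `0` otherwise. -/
theorem pullback_of_omega (K : Type*) [Field K] (N d n : ℕ) (hN : 2 ≤ N)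
    (hn1 : 1 ≤ n) (hn2 : n ≤ N - 1) (z : Fin d → K) (w t₀ ξ : K)
    (ht₀ : t₀ ≠ 0) (hw : w ≠ 0) (hz : ∀ i, z i ≠ 0)
    (hξ : Even N ∧ Even d → ξ ^ N = -1) :
    (∏ i, (1 - (z i)⁻¹) ^ (n - 1)) * ((∏ i, (z i)⁻¹) - (t₀ ^ N)⁻¹) ^ (n - 1) *
        ((-1 : K) ^ d * ((∏ i, z i) ^ 2)⁻¹) /
        ((if Even N ∧ Even d then ξ else 1) * w / ((∏ i, z i) ^ 2 * t₀ ^ (N - 1))) ^ n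
      = (-1 : K) ^ ((d + 1) * n - 1) *
          (ξ ^ (if Even N ∧ Even d then n else 0))⁻¹ * t₀ ^ (N - n) *
          ((∏ i, (1 - z i) ^ (n - 1)) * ((∏ i, z i) - t₀ ^ N) ^ (n - 1)) / w ^ n := by
  have hP : (∏ i, z i) ≠ 0 := Finset.prod_ne_zero_iff.2 fun i _ => hz i
  obtain ⟨m, rfl⟩ : ∃ m, n = m + 1 := ⟨n - 1, by omega⟩
  obtain ⟨j, rfl⟩ : ∃ j, N = m + j + 2 := ⟨N - m - 2, by omega⟩
  have e1 : (∏ i, (1 - (z i)⁻¹) ^ (m + 1 - 1))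
      = ((-1 : K) ^ d * (∏ i, z i)⁻¹ * ∏ i, (1 - z i)) ^ m := by
    rw [Finset.prod_pow, Nat.add_sub_cancel]
    congr 1
    rw [show ((-1 : K) ^ d * (∏ i, z i)⁻¹ * ∏ i, (1 - z i))
        = ∏ i, (-1 * (z i)⁻¹ * (1 - z i)) by
      rw [Finset.prod_mul_distrib, Finset.prod_mul_distrib, Finset.prod_const,
        Finset.prod_inv_distrib]; simp]
    refine Finset.prod_congr rfl fun i _ => ?_
    field_simp
    rw [sub_div, div_self (hz i)]
    ring
  have e2 : (∏ i, (z i)⁻¹) - (t₀ ^ (m + j + 2))⁻¹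
      = -((∏ i, z i)⁻¹ * (t₀ ^ (m + j + 2))⁻¹) * ((∏ i, z i) - t₀ ^ (m + j + 2)) := by
    rw [Finset.prod_inv_distrib]
    field_simp
    ring
  have e3 : (∏ i, (1 - z i) ^ (m + 1 - 1)) = (∏ i, (1 - z i)) ^ m := by
    rw [Finset.prod_pow, Nat.add_sub_cancel]
  rw [e1, e2, e3]
  have hNn : m + j + 2 - (m + 1) = j + 1 := by omega
  have hN1 : m + j + 2 - 1 = m + j + 1 := by omega
  have hdn : (d + 1) * (m + 1) - 1 = d * (m + 1) + m := by
    have : (d + 1) * (m + 1) = d * (m + 1) + m + 1 := by ring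
    omega
  rw [hNn, hN1, hdn, Nat.add_sub_cancel]
  by_cases h : Even (m + j + 2) ∧ Even d
  · simp only [h, if_true]
    exact pullback_key m j d _ _ _ t₀ w ξ hP ht₀
  · simp only [h, if_false, pow_zero, inv_one]
    have := pullback_key m j d (∏ i, z i) (∏ i, (1 - z i))
      ((∏ i, z i) - t₀ ^ (m + j + 2)) t₀ w 1 hP ht₀
    simpa using this
end
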